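/- If two connected components V_1, V_2 of a hypergraph H both have strength > λ and share a common vertex, then V_1 ∪ V_2 has strength > λ. -/

import Mathlib

open Finset
set_option linter.unusedSectionVars false
set_option linter.unusedVariables false

variable {V : Type*} [DecidableEq V] [Fintype V]

/-- `P` is a partition of the finite vertex set `S` into at least two nonempty parts. -/
def IsHPartition (S : Finset V) (P : Finset (Finset V)) : Prop :=
  (∀ p ∈ P, p.Nonempty) ∧ (P : Set (Finset V)).PairwiseDisjoint id ∧
    P.sup id = S ∧ 2 ≤ P.card

/-- The hyperedges of `E` crossing the partition `P` (not contained in a single part). -/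
def hcrossing (E : Finset (Finset V)) (P : Finset (Finset V)) : Finset (Finset V) :=
  E.filter fun e => ∀ p ∈ P, ¬ e ⊆ p

/-- Normalized value of the cut given by partition `P`. -/
noncomputable def hcutVal (E : Finset (Finset V)) (P : Finset (Finset V)) : ℝ :=
  ((hcrossing E P).card : ℝ) / ((P.card : ℝ) - 1)

/-- Hyperedges induced on the vertex subset `S`. -/
def hinduced (E : Finset (Finset V)) (S : Finset V) : Finset (Finset V) :=
  E.filter fun e => e ⊆ S

/-- Minimum normalized k-cut value of the induced subhypergraph on `S`. -/
noncomputable def hPhi (E : Finset (Finset V)) (S : Finset V) : ℝ :=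
  sInf {x : ℝ | ∃ P, IsHPartition S P ∧ x = hcutVal (hinduced E S) P}

/-- Strength of a hyperedge: `λ_e = max_{e ⊆ S} Φ(H[S])`. -/
noncomputable def hstrength (E : Finset (Finset V)) (e : Finset V) : ℝ :=
  sSup {x : ℝ | ∃ S : Finset V, e ⊆ S ∧ x = hPhi E S}

/-- `S` is connected in the hypergraph with edge set `E` (via hyperedges inside `S`). -/
def HConnected (E : Finset (Finset V)) (S : Finset V) : Prop :=
  ∀ u ∈ S, ∀ v ∈ S,
    Relation.ReflTransGen (fun a b => ∃ e ∈ E, e ⊆ S ∧ a ∈ e ∧ b ∈ e) u v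


-- Auxiliary lemmas

lemma hcutVal_nonneg (E P : Finset (Finset V)) (hP : 2 ≤ P.card) : 0 ≤ hcutVal E P := by
  have : (0:ℝ) < (P.card : ℝ) - 1 := by
    have : (2:ℝ) ≤ (P.card : ℝ) := by exact_mod_cast hP
    linarith
  exact div_nonneg (by positivity) this.le

lemma hPhiSet_finite (E : Finset (Finset V)) (S : Finset V) :
    {x : ℝ | ∃ P, IsHPartition S P ∧ x = hcutVal (hinduced E S) P}.Finite := by
  have : {x : ℝ | ∃ P, IsHPartition S P ∧ x = hcutVal (hinduced E S) P} ⊆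
      (fun P => hcutVal (hinduced E S) P) '' Set.univ := by
    rintro x ⟨P, _, rfl⟩; exact ⟨P, trivial, rfl⟩
  exact (Set.finite_univ.image _).subset this

lemma hPhi_nonneg (E : Finset (Finset V)) (S : Finset V) : 0 ≤ hPhi E S := by
  apply Real.sInf_nonneg
  rintro x ⟨P, hP, rfl⟩
  exact hcutVal_nonneg _ _ hP.2.2.2

lemma hPhi_le (E : Finset (Finset V)) (S : Finset V) (P : Finset (Finset V)) (hP : IsHPartition S P) :
    hPhi E S ≤ hcutVal (hinduced E S) P := by
  apply csInf_le
  · exact ⟨0, by rintro x ⟨Q, hQ, rfl⟩; exact hcutVal_nonneg _ _ hQ.2.2.2⟩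
  · exact ⟨P, hP, rfl⟩

lemma lt_hPhi_of_forall (E : Finset (Finset V)) (S : Finset V) (lam : ℝ)
    (h : ∀ P, IsHPartition S P → lam < hcutVal (hinduced E S) P)
    (hex : (∃ P, IsHPartition S P) ∨ lam < 0) : lam < hPhi E S := by
  by_cases hne : {x : ℝ | ∃ P, IsHPartition S P ∧ x = hcutVal (hinduced E S) P}.Nonempty
  · have := hne.csInf_mem (hPhiSet_finite E S)
    obtain ⟨P, hP, hval⟩ := this
    rw [hPhi, hval]
    exact h P hP
  · rcases hex with ⟨P, hP⟩ | hneg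
    · exact absurd ⟨_, P, hP, rfl⟩ hne
    · rw [Set.not_nonempty_iff_eq_empty] at hne
      rw [hPhi, hne, Real.sInf_empty]
      exact hneg

lemma lt_hstrength_of (E : Finset (Finset V)) (e T : Finset V) (lam : ℝ)
    (heT : e ⊆ T) (h : lam < hPhi E T) : lam < hstrength E e := by
  have hfin : {x : ℝ | ∃ S : Finset V, e ⊆ S ∧ x = hPhi E S}.Finite := by
    have : {x : ℝ | ∃ S : Finset V, e ⊆ S ∧ x = hPhi E S} ⊆
        (fun S => hPhi E S) '' Set.univ := by
      rintro x ⟨S, _, rfl⟩; exact ⟨S, trivial, rfl⟩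
    exact (Set.finite_univ.image _).subset this
  refine lt_of_lt_of_le h (le_csSup hfin.bddAbove ⟨T, heT, rfl⟩)

lemma exists_witness (E : Finset (Finset V)) (e : Finset V) (lam : ℝ)
    (h : lam < hstrength E e) : ∃ T, e ⊆ T ∧ lam < hPhi E T := by
  have hfin : {x : ℝ | ∃ S : Finset V, e ⊆ S ∧ x = hPhi E S}.Finite := by
    have : {x : ℝ | ∃ S : Finset V, e ⊆ S ∧ x = hPhi E S} ⊆
        (fun S => hPhi E S) '' Set.univ := by
      rintro x ⟨S, _, rfl⟩; exact ⟨S, trivial, rfl⟩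
    exact (Set.finite_univ.image _).subset this
  have hne : {x : ℝ | ∃ S : Finset V, e ⊆ S ∧ x = hPhi E S}.Nonempty :=
    ⟨hPhi E Finset.univ, Finset.univ, e.subset_univ, rfl⟩
  have := hne.csSup_mem hfin
  obtain ⟨T, hT, hval⟩ := this
  exact ⟨T, hT, hval ▸ h⟩

-- restriction of a partition of W to A ⊆ W
lemma restrict_injOn (A : Finset V) (P : Finset (Finset V))
    (hdisj : (P : Set (Finset V)).PairwiseDisjoint id) :
    ∀ p ∈ (P.filter fun p => (p ∩ A).Nonempty),
      ∀ q ∈ (P.filter fun p => (p ∩ A).Nonempty), p ∩ A = q ∩ A → p = q := by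
  intro p hp q hq hpq
  by_contra hne
  rw [mem_filter] at hp hq
  obtain ⟨y, hy⟩ := hp.2
  have hyq : y ∈ q ∩ A := hpq ▸ hy
  have := hdisj hp.1 hq.1 hne
  exact (Finset.disjoint_left.mp this (mem_inter.mp hy).1) (mem_inter.mp hyq).1

lemma restrict_card (A : Finset V) (P : Finset (Finset V))
    (hdisj : (P : Set (Finset V)).PairwiseDisjoint id) :
    ((P.filter fun p => (p ∩ A).Nonempty).image (· ∩ A)).card
      = (P.filter fun p => (p ∩ A).Nonempty).card :=
  Finset.card_image_of_injOn (restrict_injOn A P hdisj)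

lemma isHPartition_restrict (A W : Finset V) (hAW : A ⊆ W) (P : Finset (Finset V))
    (hP : IsHPartition W P)
    (h2 : 2 ≤ (P.filter fun p => (p ∩ A).Nonempty).card) :
    IsHPartition A ((P.filter fun p => (p ∩ A).Nonempty).image (· ∩ A)) := by
  obtain ⟨hpne, hdisj, hsup, hk⟩ := hP
  refine ⟨?_, ?_, ?_, ?_⟩
  · intro q hq
    obtain ⟨p, hp, rfl⟩ := mem_image.mp hq
    exact (mem_filter.mp hp).2
  · rintro q1 hq1 q2 hq2 hne
    simp only [coe_image, Set.mem_image, mem_coe] at hq1 hq2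
    obtain ⟨p1, hp1, rfl⟩ := hq1
    obtain ⟨p2, hp2, rfl⟩ := hq2
    have hpne12 : p1 ≠ p2 := by rintro rfl; exact hne rfl
    have := hdisj (mem_coe.mpr (mem_of_mem_filter _ hp1))
      (mem_coe.mpr (mem_of_mem_filter _ hp2)) hpne12
    exact this.mono inter_subset_left inter_subset_left
  · apply subset_antisymm
    · intro a ha
      rw [mem_sup] at ha
      obtain ⟨q, hq, haq⟩ := ha
      obtain ⟨p, _, rfl⟩ := mem_image.mp hq
      exact (mem_inter.mp haq).2
    · intro a ha
      have haW : a ∈ W := hAW ha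
      rw [← hsup, mem_sup] at haW
      obtain ⟨p, hp, hap⟩ := haW
      rw [mem_sup]
      refine ⟨p ∩ A, mem_image_of_mem _ (mem_filter.mpr ⟨hp, ⟨a, mem_inter.mpr ⟨hap, ha⟩⟩⟩),
        mem_inter.mpr ⟨hap, ha⟩⟩
  · rw [restrict_card A P hdisj]; exact h2

lemma crossing_restrict_subset (E : Finset (Finset V)) (A W : Finset V) (hAW : A ⊆ W)
    (P : Finset (Finset V))
    (h1 : (P.filter fun p => (p ∩ A).Nonempty).Nonempty) :
    hcrossing (hinduced E A) ((P.filter fun p => (p ∩ A).Nonempty).image (· ∩ A))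
      ⊆ hcrossing (hinduced E W) P := by
  intro e he
  rw [hcrossing, mem_filter] at he ⊢
  obtain ⟨heEA, hecross⟩ := he
  rw [hinduced, mem_filter] at heEA
  refine ⟨mem_filter.mpr ⟨heEA.1, heEA.2.trans hAW⟩, ?_⟩
  intro p hp hep
  have hepA : e ⊆ p ∩ A := subset_inter hep heEA.2
  by_cases hpA : (p ∩ A).Nonempty
  · exact hecross (p ∩ A) (mem_image_of_mem _ (mem_filter.mpr ⟨hp, hpA⟩)) hepA
  · -- then e = ∅, but any element of the (nonempty) image contains e
    have he0 : e = ∅ := by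
      rw [Finset.not_nonempty_iff_eq_empty] at hpA
      exact subset_empty.mp (hpA ▸ hepA)
    obtain ⟨q, hq⟩ := h1
    exact hecross (q ∩ A) (mem_image_of_mem _ hq) (he0 ▸ empty_subset _)

section Merge
variable (A W : Finset V) (P : Finset (Finset V))

/-- the merged partition: all parts meeting A are fused into one -/
noncomputable def mergedP : Finset (Finset V) :=
  insert ((P.filter fun p => (p ∩ A).Nonempty).sup id) (P.filter fun p => ¬ (p ∩ A).Nonempty)

lemma subset_merged (hAW : A ⊆ W) (hsup : P.sup id = W) :
    A ⊆ (P.filter fun p => (p ∩ A).Nonempty).sup id := by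
  intro a ha
  have : a ∈ P.sup id := hsup ▸ hAW ha
  rw [mem_sup] at this
  obtain ⟨p, hp, hap⟩ := this
  rw [mem_sup]
  exact ⟨p, mem_filter.mpr ⟨hp, ⟨a, mem_inter.mpr ⟨hap, ha⟩⟩⟩, hap⟩

lemma merged_not_mem (hAne : A.Nonempty) (hAW : A ⊆ W) (hsup : P.sup id = W) :
    ((P.filter fun p => (p ∩ A).Nonempty).sup id) ∉ (P.filter fun p => ¬ (p ∩ A).Nonempty) := by
  intro hmem
  obtain ⟨a, ha⟩ := hAne
  have haM := subset_merged A W P hAW hsup ha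
  exact (mem_filter.mp hmem).2 ⟨a, mem_inter.mpr ⟨haM, ha⟩⟩

lemma merged_card (hAne : A.Nonempty) (hAW : A ⊆ W) (hsup : P.sup id = W) :
    (mergedP A P).card = (P.filter fun p => ¬ (p ∩ A).Nonempty).card + 1 := by
  rw [mergedP, card_insert_of_notMem (merged_not_mem A W P hAne hAW hsup)]

lemma isHPartition_merged (hAne : A.Nonempty) (hAW : A ⊆ W) (hP : IsHPartition W P)
    (hlt : (P.filter fun p => (p ∩ A).Nonempty).card < P.card) :
    IsHPartition W (mergedP A P) := by
  obtain ⟨hpne, hdisj, hsup, hk⟩ := hP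
  have hPA_ne : (P.filter fun p => (p ∩ A).Nonempty).Nonempty := by
    obtain ⟨a, ha⟩ := hAne
    have : a ∈ P.sup id := hsup ▸ hAW ha
    rw [mem_sup] at this
    obtain ⟨p, hp, hap⟩ := this
    exact ⟨p, mem_filter.mpr ⟨hp, ⟨a, mem_inter.mpr ⟨hap, ha⟩⟩⟩⟩
  have hR_ne : (P.filter fun p => ¬ (p ∩ A).Nonempty).Nonempty := by
    by_contra h
    rw [Finset.not_nonempty_iff_eq_empty, filter_not, sdiff_eq_empty_iff_subset] at h
    exact absurd (le_antisymm (card_le_card (filter_subset _ _)) (card_le_card h)) hlt.ne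
  refine ⟨?_, ?_, ?_, ?_⟩
  · intro p hp
    rw [mergedP, mem_insert] at hp
    rcases hp with rfl | hp
    · obtain ⟨a, ha⟩ := hAne
      exact ⟨a, subset_merged A W P hAW hsup ha⟩
    · exact hpne p (mem_of_mem_filter _ hp)
  · rw [mergedP, coe_insert]
    apply Set.PairwiseDisjoint.insert
    · exact hdisj.subset (by exact_mod_cast coe_subset.mpr (filter_subset _ _))
    · intro r hr _
      rw [mem_coe, mem_filter] at hr
      rw [id, id, Finset.disjoint_sup_left]
      intro p hp
      have hpf := mem_filter.mp hp
      have hne : p ≠ r := by rintro rfl; exact hr.2 hpf.2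
      exact hdisj (mem_coe.mpr hpf.1) (mem_coe.mpr hr.1) hne
  · rw [mergedP, sup_insert, id, ← sup_union, filter_union_filter_not_eq, hsup]
  · rw [merged_card A W P hAne hAW hsup]
    have := card_pos.mpr hR_ne
    omega

lemma crossing_merged_subset (E : Finset (Finset V)) :
    hcrossing (hinduced E W) (mergedP A P) ⊆ hcrossing (hinduced E W) P := by
  intro e he
  rw [hcrossing, mem_filter, mergedP] at he
  rw [hcrossing, mem_filter]
  refine ⟨he.1, ?_⟩
  intro p hp hep
  by_cases hpA : (p ∩ A).Nonempty
  · have hpmem : p ∈ P.filter fun q => (q ∩ A).Nonempty := mem_filter.mpr ⟨hp, hpA⟩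
    have hpM : p ⊆ (P.filter fun q => (q ∩ A).Nonempty).sup id :=
      Finset.le_sup (f := id) hpmem
    exact he.2 _ (mem_insert_self _ _) (hep.trans hpM)
  · have hpmem : p ∈ P.filter fun q => ¬ (q ∩ A).Nonempty := mem_filter.mpr ⟨hp, hpA⟩
    exact he.2 p (mem_insert_of_mem hpmem) hep

lemma crossing_merged_disjoint (E : Finset (Finset V)) (hAW : A ⊆ W) (hsup : P.sup id = W) :
    Disjoint (hcrossing (hinduced E A) ((P.filter fun p => (p ∩ A).Nonempty).image (· ∩ A)))
      (hcrossing (hinduced E W) (mergedP A P)) := by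
  rw [Finset.disjoint_left]
  intro e heA heQ
  rw [hcrossing, mem_filter] at heA
  rw [hcrossing, mem_filter, mergedP] at heQ
  have heEA := heA.1
  rw [hinduced, mem_filter] at heEA
  exact heQ.2 _ (mem_insert_self _ _) (heEA.2.trans (subset_merged A W P hAW hsup))

end Merge

lemma key_count (E : Finset (Finset V)) (A B : Finset V) (lam : ℝ) (x : V)
    (hxA : x ∈ A) (hxB : x ∈ B)
    (hA : ∀ PA, IsHPartition A PA →
      lam * ((PA.card : ℝ) - 1) < ((hcrossing (hinduced E A) PA).card : ℝ))
    (hB : ∀ PB, IsHPartition B PB →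
      lam * ((PB.card : ℝ) - 1) < ((hcrossing (hinduced E B) PB).card : ℝ)) :
    ∀ P : Finset (Finset V), IsHPartition (A ∪ B) P →
      lam * ((P.card : ℝ) - 1) < ((hcrossing (hinduced E (A ∪ B)) P).card : ℝ) := by
  suffices H : ∀ n (P : Finset (Finset V)), P.card = n → IsHPartition (A ∪ B) P →
      lam * ((P.card : ℝ) - 1) < ((hcrossing (hinduced E (A ∪ B)) P).card : ℝ) by
    exact fun P hP => H P.card P rfl hP
  intro n
  induction n using Nat.strong_induction_on with
  | _ n ih =>
  intro P hcard hP
  -- a part containing x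
  have hxW : x ∈ P.sup id := by
    rw [hP.2.2.1]; exact mem_union_left _ hxA
  rw [mem_sup] at hxW
  obtain ⟨p₀, hp₀, hxp₀⟩ := hxW
  -- the "direct" case: all parts meet C
  have direct : ∀ C : Finset V, C ⊆ A ∪ B →
      (∀ PC, IsHPartition C PC →
        lam * ((PC.card : ℝ) - 1) < ((hcrossing (hinduced E C) PC).card : ℝ)) →
      (P.filter fun p => (p ∩ C).Nonempty).card = P.card →
      lam * ((P.card : ℝ) - 1) < ((hcrossing (hinduced E (A ∪ B)) P).card : ℝ) := by
    intro C hCW hC hfull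
    have h2 : 2 ≤ (P.filter fun p => (p ∩ C).Nonempty).card := by
      rw [hfull]; exact hP.2.2.2
    have hpart := isHPartition_restrict C (A ∪ B) hCW P hP h2
    have hlt := hC _ hpart
    have hsub := crossing_restrict_subset E C (A ∪ B) hCW P (card_pos.mp (by omega))
    have hcardle := card_le_card hsub
    have hcards : ((P.filter fun p => (p ∩ C).Nonempty).image (· ∩ C)).card = P.card := by
      rw [restrict_card C P hP.2.1, hfull]
    rw [hcards] at hlt
    calc lam * ((P.card : ℝ) - 1) < _ := hlt
      _ ≤ _ := by exact_mod_cast hcardle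
  -- counting parts
  have hunion : (P.filter fun p => (p ∩ A).Nonempty) ∪ (P.filter fun p => (p ∩ B).Nonempty)
      = P := by
    apply subset_antisymm (union_subset (filter_subset _ _) (filter_subset _ _))
    intro p hp
    obtain ⟨y, hy⟩ := hP.1 p hp
    have hyW : y ∈ A ∪ B := by
      rw [← hP.2.2.1, mem_sup]; exact ⟨p, hp, hy⟩
    rcases mem_union.mp hyW with hyA | hyB
    · exact mem_union_left _ (mem_filter.mpr ⟨hp, ⟨y, mem_inter.mpr ⟨hy, hyA⟩⟩⟩)
    · exact mem_union_right _ (mem_filter.mpr ⟨hp, ⟨y, mem_inter.mpr ⟨hy, hyB⟩⟩⟩)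
  have hp₀AB : p₀ ∈ (P.filter fun p => (p ∩ A).Nonempty) ∩
      (P.filter fun p => (p ∩ B).Nonempty) :=
    mem_inter.mpr ⟨mem_filter.mpr ⟨hp₀, ⟨x, mem_inter.mpr ⟨hxp₀, hxA⟩⟩⟩,
      mem_filter.mpr ⟨hp₀, ⟨x, mem_inter.mpr ⟨hxp₀, hxB⟩⟩⟩⟩
  have hcount : P.card + 1 ≤ (P.filter fun p => (p ∩ A).Nonempty).card
      + (P.filter fun p => (p ∩ B).Nonempty).card := by
    have := Finset.card_union_add_card_inter (P.filter fun p => (p ∩ A).Nonempty)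
      (P.filter fun p => (p ∩ B).Nonempty)
    rw [hunion] at this
    have hpos : 0 < ((P.filter fun p => (p ∩ A).Nonempty) ∩
        (P.filter fun p => (p ∩ B).Nonempty)).card := card_pos.mpr ⟨p₀, hp₀AB⟩
    omega
  have hkAle : (P.filter fun p => (p ∩ A).Nonempty).card ≤ P.card :=
    card_le_card (filter_subset _ _)
  have hkBle : (P.filter fun p => (p ∩ B).Nonempty).card ≤ P.card :=
    card_le_card (filter_subset _ _)
  by_cases hAfull : (P.filter fun p => (p ∩ A).Nonempty).card = P.card
  · exact direct A subset_union_left hA hAfull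
  by_cases hBfull : (P.filter fun p => (p ∩ B).Nonempty).card = P.card
  · exact direct B subset_union_right hB hBfull
  -- merge case
  have hkA2 : 2 ≤ (P.filter fun p => (p ∩ A).Nonempty).card := by omega
  have hkAlt : (P.filter fun p => (p ∩ A).Nonempty).card < P.card := by omega
  have hQpart := isHPartition_merged A (A ∪ B) P ⟨x, hxA⟩ subset_union_left hP hkAlt
  have hRcard : (P.filter fun p => ¬ (p ∩ A).Nonempty).card
      = P.card - (P.filter fun p => (p ∩ A).Nonempty).card := by
    rw [filter_not, card_sdiff_of_subset (filter_subset _ _)]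
  have hQcard : (mergedP A P).card = P.card - (P.filter fun p => (p ∩ A).Nonempty).card + 1 := by
    rw [merged_card A (A ∪ B) P ⟨x, hxA⟩ subset_union_left hP.2.2.1, hRcard]
  have hQlt : (mergedP A P).card < n := by omega
  have hQind := ih (mergedP A P).card hQlt (mergedP A P) rfl hQpart
  -- restriction to A
  have hpartA := isHPartition_restrict A (A ∪ B) subset_union_left P hP hkA2
  have hltA := hA _ hpartA
  rw [restrict_card A P hP.2.1] at hltA
  -- disjointness and inclusion
  have hdisj := crossing_merged_disjoint A (A ∪ B) P E subset_union_left hP.2.2.1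
  have hsubA := crossing_restrict_subset E A (A ∪ B) subset_union_left P
    (card_pos.mp (by omega))
  have hsubQ := crossing_merged_subset A (A ∪ B) P E
  have hcardsum :
      ((hcrossing (hinduced E A) ((P.filter fun p => (p ∩ A).Nonempty).image (· ∩ A))).card : ℝ)
      + ((hcrossing (hinduced E (A ∪ B)) (mergedP A P)).card : ℝ)
      ≤ ((hcrossing (hinduced E (A ∪ B)) P).card : ℝ) := by
    have h1 := Finset.card_union_of_disjoint hdisj
    have h2 := card_le_card (union_subset hsubA hsubQ)
    rw [h1] at h2
    exact_mod_cast h2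
  have hcast : ((mergedP A P).card : ℝ)
      = (P.card : ℝ) - ((P.filter fun p => (p ∩ A).Nonempty).card : ℝ) + 1 := by
    rw [hQcard]
    push_cast [Nat.cast_sub hkAle]
    ring
  rw [hcast] at hQind
  nlinarith [hltA, hQind, hcardsum]

lemma lam_mul_lt (E : Finset (Finset V)) (S : Finset V) (lam : ℝ) (h : lam < hPhi E S) :
    ∀ P, IsHPartition S P →
      lam * ((P.card : ℝ) - 1) < ((hcrossing (hinduced E S) P).card : ℝ) := by
  intro P hP
  have hlt := lt_of_lt_of_le h (hPhi_le E S P hP)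
  have hd : (0:ℝ) < (P.card : ℝ) - 1 := by
    have : (2:ℝ) ≤ (P.card : ℝ) := by exact_mod_cast hP.2.2.2
    linarith
  rw [hcutVal, lt_div_iff₀ hd] at hlt
  exact hlt

lemma exists_partition_of_subset (S W : Finset V) (hSW : S ⊆ W)
    (hex : ∃ P, IsHPartition S P) : ∃ Q, IsHPartition W Q := by
  obtain ⟨P, hP⟩ := hex
  by_cases h : (W \ S).Nonempty
  · refine ⟨insert (W \ S) P, ?_, ?_, ?_, ?_⟩
    · intro p hp
      rcases mem_insert.mp hp with rfl | hp
      · exact h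
      · exact hP.1 p hp
    · rw [coe_insert]
      apply Set.PairwiseDisjoint.insert hP.2.1
      intro p hp _
      have hpS : p ⊆ S := hP.2.2.1 ▸ Finset.le_sup (f := id) (mem_coe.mp hp)
      exact Finset.sdiff_disjoint.mono_right hpS
    · rw [sup_insert, hP.2.2.1]
      simpa using sdiff_union_of_subset hSW
    · calc 2 ≤ P.card := hP.2.2.2
        _ ≤ _ := card_le_card (subset_insert _ _)
  · have hWS : W = S := by
      rw [Finset.not_nonempty_iff_eq_empty, sdiff_eq_empty_iff_subset] at h
      exact subset_antisymm h hSW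
    exact ⟨P, hWS ▸ hP⟩

lemma strong_union (E : Finset (Finset V)) (A B : Finset V) (lam : ℝ)
    (hAB : (A ∩ B).Nonempty) (hA : lam < hPhi E A) (hB : lam < hPhi E B) :
    lam < hPhi E (A ∪ B) := by
  obtain ⟨x, hx⟩ := hAB
  have hxA := (mem_inter.mp hx).1
  have hxB := (mem_inter.mp hx).2
  apply lt_hPhi_of_forall
  · intro P hP
    have key := key_count E A B lam x hxA hxB (lam_mul_lt E A lam hA)
      (lam_mul_lt E B lam hB) P hP
    have hd : (0:ℝ) < (P.card : ℝ) - 1 := by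
      have : (2:ℝ) ≤ (P.card : ℝ) := by exact_mod_cast hP.2.2.2
      linarith
    rw [hcutVal, lt_div_iff₀ hd]
    exact key
  · by_cases hex : ∃ P, IsHPartition (A ∪ B) P
    · exact Or.inl hex
    · right
      have hnoA : ¬ ∃ P, IsHPartition A P := fun h =>
        hex (exists_partition_of_subset A (A ∪ B) subset_union_left h)
      have hzero : hPhi E A = 0 := by
        rw [hPhi]
        convert Real.sInf_empty
        rw [Set.eq_empty_iff_forall_notMem]
        rintro y ⟨P, hP, _⟩
        exact hnoA ⟨P, hP⟩
      linarith [hA, hzero.symm ▸ hA]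


lemma exists_strong_superset (E : Finset (Finset V)) (S : Finset V) (lam : ℝ)
    (hconn : HConnected E S) (h2 : 2 ≤ S.card)
    (hstr : ∀ e ∈ hinduced E S, lam < hstrength E e) :
    ∃ T, S ⊆ T ∧ lam < hPhi E T := by
  have hedge : ∀ v ∈ S, ∃ f ∈ E, f ⊆ S ∧ v ∈ f := by
    intro v hv
    obtain ⟨a, ha, b, hb, hab⟩ := Finset.one_lt_card.mp h2
    have huq : ∃ u ∈ S, u ≠ v := by
      rcases eq_or_ne a v with rfl | h
      · exact ⟨b, hb, hab.symm⟩
      · exact ⟨a, ha, h⟩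
    obtain ⟨u, hu, huv⟩ := huq
    have hpath := hconn v hv u hu
    rcases Relation.ReflTransGen.cases_head hpath with rfl | ⟨c, hrel, _⟩
    · exact absurd rfl huv.symm
    · obtain ⟨f, hf, hfS, hvf, _⟩ := hrel
      exact ⟨f, hf, hfS, hvf⟩
  have hS : S.Nonempty := card_pos.mp (by omega)
  obtain ⟨r, hr⟩ := hS
  have hgood : ∀ v ∈ S, ∃ T, r ∈ T ∧ v ∈ T ∧ lam < hPhi E T := by
    suffices h : ∀ v, Relation.ReflTransGen
        (fun a b => ∃ e ∈ E, e ⊆ S ∧ a ∈ e ∧ b ∈ e) r v →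
        ∃ T, r ∈ T ∧ v ∈ T ∧ lam < hPhi E T by
      exact fun v hv => h v (hconn r hr v hv)
    intro v hpath
    induction hpath with
    | refl =>
      obtain ⟨f, hf, hfS, hrf⟩ := hedge r hr
      have hmem : f ∈ hinduced E S := by
        simp only [hinduced, mem_filter]; exact ⟨hf, hfS⟩
      obtain ⟨T, hfT, hT⟩ := exists_witness E f lam (hstr f hmem)
      exact ⟨T, hfT hrf, hfT hrf, hT⟩
    | @tail b c hp hrel ih =>
      obtain ⟨T, hrT, hbT, hT⟩ := ih
      obtain ⟨g, hg, hgS, hbg, hcg⟩ := hrel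
      have hmem : g ∈ hinduced E S := by
        simp only [hinduced, mem_filter]; exact ⟨hg, hgS⟩
      obtain ⟨T', hgT', hT'⟩ := exists_witness E g lam (hstr g hmem)
      refine ⟨T ∪ T', mem_union_left _ hrT, mem_union_right _ (hgT' hcg), ?_⟩
      exact strong_union E T T' lam ⟨b, mem_inter.mpr ⟨hbT, hgT' hbg⟩⟩ hT hT'
  choose! T hT₁ hT₂ hT₃ using hgood
  have aux : ∀ s : Finset V, s ⊆ S → s.Nonempty → r ∈ s.sup T ∧ lam < hPhi E (s.sup T) := by
    intro s
    induction s using Finset.induction_on with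
    | empty => intro _ h; exact absurd h (by simp)
    | insert a s' ha ih =>
      intro hsub _
      have haS : a ∈ S := hsub (mem_insert_self _ _)
      rcases s'.eq_empty_or_nonempty with rfl | hs'
      · rw [sup_insert, sup_empty, sup_bot_eq]
        exact ⟨hT₁ a haS, hT₃ a haS⟩
      · have ihh := ih (fun y hy => hsub (mem_insert_of_mem hy)) hs'
        rw [sup_insert, Finset.sup_eq_union]
        have hshare : ((T a) ∩ (s'.sup T)).Nonempty :=
          ⟨r, mem_inter.mpr ⟨hT₁ a haS, ihh.1⟩⟩
        exact ⟨mem_union_left _ (hT₁ a haS),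
          strong_union E (T a) (s'.sup T) lam hshare (hT₃ a haS) ihh.2⟩
  obtain ⟨hrT, hTstrong⟩ := aux S (subset_refl S) ⟨r, hr⟩
  refine ⟨S.sup T, ?_, hTstrong⟩
  intro v hv
  exact (Finset.le_sup (f := T) hv) (hT₂ v hv)


/-- two connected components of strength `> λ` sharing a common
vertex union to a component of strength `> λ`. -/
theorem union_strength_of_shared_vertex (E : Finset (Finset V)) (V₁ V₂ : Finset V)
    (hconn₁ : HConnected E V₁) (hconn₂ : HConnected E V₂)
    (hne₁ : (hinduced E V₁).Nonempty) (hne₂ : (hinduced E V₂).Nonempty)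
    (hshare : (V₁ ∩ V₂).Nonempty) (lam : ℝ)
    (h₁ : ∀ e ∈ hinduced E V₁, lam < hstrength E e)
    (h₂ : ∀ e ∈ hinduced E V₂, lam < hstrength E e) :
    ∀ e ∈ hinduced E (V₁ ∪ V₂), lam < hstrength E e := by
  intro e he
  rw [hinduced, mem_filter] at he
  obtain ⟨heE, heW⟩ := he
  by_cases he1 : e ⊆ V₁
  · exact h₁ e (by simp only [hinduced, mem_filter]; exact ⟨heE, he1⟩)
  by_cases he2 : e ⊆ V₂
  · exact h₂ e (by simp only [hinduced, mem_filter]; exact ⟨heE, he2⟩)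
  obtain ⟨x, hx⟩ := hshare
  have hxA := (mem_inter.mp hx).1
  have hxB := (mem_inter.mp hx).2
  obtain ⟨b, hbe, hb2⟩ := not_subset.mp he2
  have hb1 : b ∈ V₁ := (mem_union.mp (heW hbe)).resolve_right hb2
  obtain ⟨a, hae, ha1⟩ := not_subset.mp he1
  have ha2 : a ∈ V₂ := (mem_union.mp (heW hae)).resolve_left ha1
  have h2V₁ : 2 ≤ V₁.card := by
    have := Finset.one_lt_card.mpr ⟨b, hb1, x, hxA, fun hbx => hb2 (hbx ▸ hxB)⟩
    omega
  have h2V₂ : 2 ≤ V₂.card := by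
    have := Finset.one_lt_card.mpr ⟨a, ha2, x, hxB, fun hax => ha1 (hax ▸ hxA)⟩
    omega
  obtain ⟨T₁, hS1, hT1⟩ := exists_strong_superset E V₁ lam hconn₁ h2V₁ h₁
  obtain ⟨T₂, hS2, hT2⟩ := exists_strong_superset E V₂ lam hconn₂ h2V₂ h₂
  have hshT : (T₁ ∩ T₂).Nonempty := ⟨x, mem_inter.mpr ⟨hS1 hxA, hS2 hxB⟩⟩
  have hstrongU := strong_union E T₁ T₂ lam hshT hT1 hT2
  exact lt_hstrength_of E e (T₁ ∪ T₂) lam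
    (heW.trans (union_subset_union hS1 hS2)) hstrongU
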